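/- Let H be a 3-graph on n vertices, v a vertex, and suppose δ₂(H) > 7n/9. Colour each edge {u,w} of the link graph L(v) by the tight component φ({u,v,w}) of 𝒯(H). Then L(v) contains no path on 4 vertices whose three edges use 3 distinct colours. -/

import Mathlib

/-!
Codegrees above `7n/9` make every edge `abc` the base of more than `n/3` tetrahedra: an apex
only has to lie in the three codegree neighbourhoods of `ab`, `ac`, `bc`. Hence, for the edges
`wvx`, `xvy`, `yvz` of a path `wxyz` in the link of `v`, two of the three apex sets meet. A
common apex of consecutive edges puts them in two tetrahedra sharing a triangle, so in one tight
component. Otherwise a common apex `u` of `wvx` and `yvz` yields the edges `vxu` and `yvu`, and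
the same pigeonhole applied to `vxu`, `xvy`, `yvu` joins two of the original edges by a tight
walk through at most four tetrahedra.
-/

open Finset

/-- The tetrahedral 4-graph of a 3-graph `E`: all 4-sets of vertices all of whose
3-element subsets are edges of `E`. -/
def tet {V : Type*} [Fintype V] [DecidableEq V] (E : Finset (Finset V)) :
    Finset (Finset V) :=
  (Finset.powersetCard 4 Finset.univ).filter fun K =>
    ∀ t ∈ Finset.powersetCard 3 K, t ∈ E

/-- There is a tight walk in the 4-graph `T` from the edge `e` to the edge `f`:
a vertex sequence starting with the vertices of `e`, ending with the vertices of
`f`, in which every 4 consecutive vertices form an edge of `T`. -/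
def TightConn {V : Type*} [DecidableEq V] (T : Finset (Finset V))
    (e f : Finset V) : Prop :=
  ∃ l : List V, 4 ≤ l.length ∧ (l.take 4).toFinset = e ∧
    (l.drop (l.length - 4)).toFinset = f ∧
    ∀ i, i + 4 ≤ l.length → ((l.drop i).take 4).toFinset ∈ T

/-- The edges `e` and `f` of the 3-graph `E` lie in the same tight component of
the tetrahedral graph `tet E`: some tetrahedron containing `e` is tightly
connected to some tetrahedron containing `f`. -/
def EdgeConn {V : Type*} [Fintype V] [DecidableEq V] (E : Finset (Finset V))
    (e f : Finset V) : Prop :=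
  ∃ K K', K ∈ tet E ∧ K' ∈ tet E ∧ e ⊆ K ∧ f ⊆ K' ∧ TightConn (tet E) K K'

/-- The edge `e` of the 3-graph `E` lies in the tight component of the
tetrahedron `K`. -/
def EdgeInComp {V : Type*} [Fintype V] [DecidableEq V] (E : Finset (Finset V))
    (e K : Finset V) : Prop :=
  ∃ K', K' ∈ tet E ∧ e ⊆ K' ∧ TightConn (tet E) K' K

section Counting

variable {α : Type*} [DecidableEq α]

theorem pairwise_ne_of_card_eq_three {a b c : α} (h : ({a, b, c} : Finset α).card = 3) :
    a ≠ b ∧ a ≠ c ∧ b ≠ c := by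
  refine ⟨?_, ?_, ?_⟩ <;> rintro rfl <;> simp at h <;> grind [Finset.card_le_two]

variable [Fintype α] {A B C : Finset α}

theorem card_add_card_add_card_le_two_mul_add_card_inter (s t u : Finset α) :
    #s + #t + #u ≤ 2 * Fintype.card α + #(s ∩ t ∩ u) := by
  have := card_union_add_card_inter s t
  have := card_union_add_card_inter (s ∩ t) u
  have := card_le_univ (s ∪ t)
  have := card_le_univ (s ∩ t ∪ u)
  omega

theorem exists_mem_mem_of_lt_three_mul_card (hA : Fintype.card α < 3 * #A)
    (hB : Fintype.card α < 3 * #B) (hC : Fintype.card α < 3 * #C) :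
    (∃ u ∈ A, u ∈ B) ∨ (∃ u ∈ B, u ∈ C) ∨ (∃ u ∈ A, u ∈ C) := by
  by_contra! h
  have hAB : A ∩ B = ∅ := by grind
  have hABC : (A ∪ B) ∩ C = ∅ := by grind
  have hunion₁ := card_union_add_card_inter A B
  have hunion₂ := card_union_add_card_inter (A ∪ B) C
  rw [hAB, card_empty] at hunion₁
  rw [hABC, card_empty] at hunion₂
  have := card_le_univ (A ∪ B ∪ C)
  omega

end Counting

section TightWalk

variable {V : Type*} [DecidableEq V] {T : Finset (Finset V)} {K : Finset V} {a b c d e : V}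

/-- Unlike `TightConn`, this remembers the order of the last four vertices of the walk, which is
what is needed to extend it. -/
def TightWalkTo (T : Finset (Finset V)) (K : Finset V) (a b c d : V) : Prop :=
  ∃ l : List V, (l.take 4).toFinset = K ∧ [a, b, c, d] <:+ l ∧
    ∀ i, i + 4 ≤ l.length → ((l.drop i).take 4).toFinset ∈ T

theorem TightWalkTo.start (h : {a, b, c, d} ∈ T) : TightWalkTo T {a, b, c, d} a b c d := by
  refine ⟨[a, b, c, d], by simp, List.suffix_refl _, fun i hi => ?_⟩
  obtain rfl : i = 0 := by simpa using hi
  simpa using h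

theorem TightWalkTo.snoc (hw : TightWalkTo T K a b c d) (he : {b, c, d, e} ∈ T) :
    TightWalkTo T K b c d e := by
  obtain ⟨l, hK, ⟨p, rfl⟩, hT⟩ := hw
  refine ⟨p ++ [a, b, c, d, e], ?_, ⟨p ++ [a], by simp⟩, fun i hi => ?_⟩
  · rw [← hK, show p ++ [a, b, c, d, e] = (p ++ [a, b, c, d]) ++ [e] by simp,
      List.take_append_of_le_length (by simp)]
  · rcases Nat.lt_or_ge i (p.length + 1) with hi' | hi'
    · rw [show p ++ [a, b, c, d, e] = (p ++ [a, b, c, d]) ++ [e] by simp,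
        List.drop_append_of_le_length (by simp; omega),
        List.take_append_of_le_length (by simp; omega)]
      exact hT i (by simp; omega)
    · obtain rfl : i = p.length + 1 := by simp at hi; omega
      rw [show p ++ [a, b, c, d, e] = (p ++ [a]) ++ [b, c, d, e] by simp,
        List.drop_left' (by simp)]
      simpa using he

theorem TightWalkTo.mem (hw : TightWalkTo T K a b c d) : {a, b, c, d} ∈ T := by
  obtain ⟨l, -, ⟨p, rfl⟩, hT⟩ := hw
  simpa using hT p.length (by simp)

theorem TightWalkTo.rotate (hw : TightWalkTo T K a b c d) : TightWalkTo T K b c d a :=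
  hw.snoc (by convert hw.mem using 1; grind)

theorem TightWalkTo.tightConn (hw : TightWalkTo T K a b c d) : TightConn T K {a, b, c, d} := by
  obtain ⟨l, hK, ⟨p, rfl⟩, hT⟩ := hw
  exact ⟨_, by simp, hK, by simp, hT⟩

end TightWalk

section Tetrahedra

variable {V : Type*} [Fintype V] [DecidableEq V] {E : Finset (Finset V)} {K e f : Finset V}
  {a b c d u t v w x y z : V}

theorem mem_tet_iff : K ∈ tet E ↔ K.card = 4 ∧ ∀ s ⊆ K, s.card = 3 → s ∈ E := by
  simp [tet]

theorem insert_mem_tet_iff (h3 : ∀ e ∈ E, e.card = 3) (habc : {a, b, c} ∈ E) :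
    insert t {a, b, c} ∈ tet E ↔ {a, b, t} ∈ E ∧ {a, c, t} ∈ E ∧ {b, c, t} ∈ E := by
  have hcard := h3 _ habc
  obtain ⟨hab, hac, hbc⟩ := pairwise_ne_of_card_eq_three hcard
  rw [mem_tet_iff]
  constructor
  · rintro ⟨hK, hsub⟩
    have ht : t ∉ ({a, b, c} : Finset V) := fun ht => by simp [ht, hcard] at hK
    simp only [mem_insert, mem_singleton, not_or] at ht
    refine ⟨hsub _ (by grind) ?_, hsub _ (by grind) ?_, hsub _ (by grind) ?_⟩ <;>
      exact card_eq_three.2 ⟨_, _, _, by grind, by grind, by grind, rfl⟩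
  · rintro ⟨hab_t, hac_t, hbc_t⟩
    obtain ⟨-, hat, hbt⟩ := pairwise_ne_of_card_eq_three (h3 _ hab_t)
    obtain ⟨-, -, hct⟩ := pairwise_ne_of_card_eq_three (h3 _ hac_t)
    have ht : t ∉ ({a, b, c} : Finset V) := by grind
    refine ⟨by rw [card_insert_of_notMem ht, hcard], fun s hs hs3 => ?_⟩
    obtain ⟨x, hxs, hK⟩ := exists_eq_insert_iff.2 ⟨hs, by rw [card_insert_of_notMem ht, hcard, hs3]⟩
    have hx : x ∈ ({t, a, b, c} : Finset V) := hK ▸ mem_insert_self x s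
    rw [← erase_insert hxs, hK]
    simp only [mem_insert, mem_singleton] at hx
    rcases hx with rfl | rfl | rfl | rfl
    · rwa [erase_insert ht]
    · convert hbc_t using 1; grind
    · convert hac_t using 1; grind
    · convert hab_t using 1; grind

def codegreeNbhd (E : Finset (Finset V)) (a b : V) : Finset V :=
  univ.filter fun w => {a, b, w} ∈ E

def tetExt (E : Finset (Finset V)) (f : Finset V) : Finset V :=
  univ.filter fun t => insert t f ∈ tet E

theorem mem_tetExt : t ∈ tetExt E f ↔ insert t f ∈ tet E := by
  simp [tetExt]

theorem mem_tetExt_swap : t ∈ tetExt E {a, b, u} ↔ u ∈ tetExt E {b, a, t} := by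
  rw [mem_tetExt, mem_tetExt, show ({t, a, b, u} : Finset V) = {u, b, a, t} by grind]

theorem tetExt_eq_inter (h3 : ∀ e ∈ E, e.card = 3) (habc : {a, b, c} ∈ E) :
    tetExt E {a, b, c} = codegreeNbhd E a b ∩ codegreeNbhd E a c ∩ codegreeNbhd E b c := by
  ext t
  simp [mem_tetExt, codegreeNbhd, insert_mem_tet_iff h3 habc]

theorem lt_three_mul_card_tetExt (h3 : ∀ e ∈ E, e.card = 3)
    (hδ : ∀ a b : V, a ≠ b → (7 : ℝ) * Fintype.card V / 9 < (codegreeNbhd E a b).card)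
    (habc : {a, b, c} ∈ E) : Fintype.card V < 3 * #(tetExt E {a, b, c}) := by
  obtain ⟨hab, hac, hbc⟩ := pairwise_ne_of_card_eq_three (h3 _ habc)
  have hsum := card_add_card_add_card_le_two_mul_add_card_inter
    (codegreeNbhd E a b) (codegreeNbhd E a c) (codegreeNbhd E b c)
  have hsumℝ := (Nat.cast_le (α := ℝ)).2 hsum
  push_cast at hsumℝ
  have := hδ a b hab
  have := hδ a c hac
  have := hδ b c hbc
  rw [tetExt_eq_inter h3 habc, ← Nat.cast_lt (α := ℝ)]
  push_cast
  linarith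

theorem TightWalkTo.edgeConn (hw : TightWalkTo (tet E) K a b c d) (hK : K ∈ tet E)
    (he : e ⊆ K) (hf : f ⊆ {a, b, c, d}) : EdgeConn E e f :=
  ⟨K, _, hK, hw.mem, he, hf, hw.tightConn⟩

theorem edgeConn_of_mem_tetExt (hu₁ : u ∈ tetExt E {a, v, b}) (hu₂ : u ∈ tetExt E {b, v, c}) :
    EdgeConn E {a, v, b} {b, v, c} := by
  rw [mem_tetExt] at hu₁ hu₂
  refine ((TightWalkTo.start hu₁).rotate.snoc (e := c) ?_).edgeConn hu₁ (by grind) (by grind)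
  convert hu₂ using 1; grind

theorem edgeConn_of_mem_tetExt_three (hu : u ∈ tetExt E {a, v, b})
    (ht₁ : t ∈ tetExt E {v, b, u}) (ht₂ : t ∈ tetExt E {b, v, c}) :
    EdgeConn E {a, v, b} {b, v, c} := by
  rw [mem_tetExt] at hu ht₁ ht₂
  have hw := (TightWalkTo.start hu).rotate.snoc (e := t) (by convert ht₁ using 1; grind)
  refine (hw.rotate.rotate.snoc (e := c) ?_).edgeConn hu (by grind) (by grind)
  convert ht₂ using 1; grind

theorem edgeConn_of_mem_tetExt_four (hu₁ : u ∈ tetExt E {w, v, x})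
    (ht₁ : t ∈ tetExt E {v, x, u}) (ht₂ : t ∈ tetExt E {y, v, u}) (hu₂ : u ∈ tetExt E {y, v, z}) :
    EdgeConn E {w, v, x} {y, v, z} := by
  rw [mem_tetExt] at hu₁ ht₁ ht₂ hu₂
  have hw₁ := (TightWalkTo.start hu₁).rotate.snoc (e := t) (by convert ht₁ using 1; grind)
  have hw₂ := hw₁.rotate.snoc (e := y) (by convert ht₂ using 1; grind)
  refine (hw₂.rotate.snoc (e := z) ?_).edgeConn hu₁ (by grind) (by grind)
  convert hu₂ using 1; grind

end Tetrahedra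

/-- If `δ₂(H) > 7n/9`, then for every vertex `v` the link graph `L(v)`, with
edges coloured by tight components of `𝒯(H)`, contains no path on 4 vertices
whose three edges use three distinct colours. -/
theorem no_rainbow_P4 {V : Type*} [Fintype V] [DecidableEq V]
    (E : Finset (Finset V)) (h3 : ∀ e ∈ E, e.card = 3)
    (hδ : ∀ u v : V, u ≠ v →
      (7 : ℝ) * Fintype.card V / 9 <
        ((Finset.univ.filter fun w' => ({u, v, w'} : Finset V) ∈ E).card : ℝ)) :
    ¬ ∃ v w x y z : V, ({w, x, y, z} : Finset V).card = 4 ∧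
      v ∉ ({w, x, y, z} : Finset V) ∧
      ({w, v, x} : Finset V) ∈ E ∧ ({x, v, y} : Finset V) ∈ E ∧
      ({y, v, z} : Finset V) ∈ E ∧
      ¬ EdgeConn E {w, v, x} {x, v, y} ∧ ¬ EdgeConn E {x, v, y} {y, v, z} ∧
      ¬ EdgeConn E {w, v, x} {y, v, z} := by
  rintro ⟨v, w, x, y, z, -, -, hwvx, hxvy, hyvz, h12, h23, h13⟩
  have hext {a b c : V} : {a, b, c} ∈ E → Fintype.card V < 3 * #(tetExt E {a, b, c}) :=
    lt_three_mul_card_tetExt h3 hδ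
  rcases exists_mem_mem_of_lt_three_mul_card (hext hwvx) (hext hxvy) (hext hyvz) with
    ⟨u, huA, huB⟩ | ⟨u, huB, huC⟩ | ⟨u, huA, huC⟩
  · exact h12 (edgeConn_of_mem_tetExt huA huB)
  · exact h23 (edgeConn_of_mem_tetExt huB huC)
  have hvxu : {v, x, u} ∈ E := ((insert_mem_tet_iff h3 hwvx).1 (mem_tetExt.1 huA)).2.2
  have hyvu : {y, v, u} ∈ E := ((insert_mem_tet_iff h3 hyvz).1 (mem_tetExt.1 huC)).1
  rcases exists_mem_mem_of_lt_three_mul_card (hext hvxu) (hext hxvy) (hext hyvu) with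
    ⟨t, htA, htB⟩ | ⟨t, htB, htC⟩ | ⟨t, htA, htC⟩
  · exact h12 (edgeConn_of_mem_tetExt_three huA htA htB)
  · exact h23 (edgeConn_of_mem_tetExt_three htB (mem_tetExt_swap.1 htC) huC)
  · exact h13 (edgeConn_of_mem_tetExt_four huA htA htC huC)
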